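/- arXiv:1911.07778 — 2 statements merged into one kernel-verified Lean document; each statement's English description precedes it below -/
import Mathlib

section
/- Let X_1,…,X_n ∈ {0,1} be a stochastic process and p_1,…,p_n ∈ [0,1] random variables such that for every t, E[X_t | X_1,…,X_{t−1}, p_1,…,p_t] = p_t. Then for any λ > 0 and any c, Pr[λ·∑_{t=1}^n X_t > (e^λ − 1)·∑_{t=1}^n p_t + c] ≤ e^{−c}. -/
/-!
Let `q = e^λ - 1`. Since `X_t ∈ {0,1}`, `e^{λ X_t} = 1 + q X_t` is affine in `X_t`, so conditioning
on the history replaces `X_t` by `p_t`; as `1 + q p_t ≤ e^{q p_t}`, each factor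
`e^{λ X_t - q p_t}` does not increase the expectation of the partial products. Hence
`E[exp (λ ∑ X_t - q ∑ p_t)] ≤ 1`, and Markov's inequality at level `e^c` gives the bound.
-/

open Finset MeasureTheory

abbrev history {Ω : Type*} {n : ℕ} (X p : Fin n → Ω → ℝ) (t : Fin n) : MeasurableSpace Ω :=
  (⨆ s : Fin n, ⨆ _ : s < t, MeasurableSpace.comap (X s) inferInstance) ⊔
    (⨆ s : Fin n, ⨆ _ : s ≤ t, MeasurableSpace.comap (p s) inferInstance)

section History

variable {Ω : Type*} {mΩ : MeasurableSpace Ω} {n : ℕ} {X p : Fin n → Ω → ℝ}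

theorem history_le (hX : ∀ t, Measurable (X t)) (hp : ∀ t, Measurable (p t)) (t : Fin n) :
    history X p t ≤ mΩ :=
  sup_le (iSup₂_le fun s _ => (hX s).comap_le) (iSup₂_le fun s _ => (hp s).comap_le)

theorem measurable_history_of_lt {s t : Fin n} (hst : s < t) : Measurable[history X p t] (X s) :=
  Measurable.of_comap_le (le_sup_of_le_left (le_iSup₂_of_le s hst le_rfl))

theorem measurable_history_of_le {s t : Fin n} (hst : s ≤ t) : Measurable[history X p t] (p s) :=
  Measurable.of_comap_le (le_sup_of_le_right (le_iSup₂_of_le s hst le_rfl))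

end History

section CondExp

variable {Ω : Type*} {m mΩ : MeasurableSpace Ω} {μ : Measure Ω} [IsFiniteMeasure μ]

theorem integral_mul_eq_of_condExp_ae_eq (hm : m ≤ mΩ) {G X Y : Ω → ℝ}
    (hG : StronglyMeasurable[m] G) (hGX : Integrable (G * X) μ) (hX : Integrable X μ)
    (hXY : μ[X | m] =ᵐ[μ] Y) : ∫ ω, G ω * X ω ∂μ = ∫ ω, G ω * Y ω ∂μ :=
  calc ∫ ω, G ω * X ω ∂μ = ∫ ω, μ[G * X | m] ω ∂μ := (integral_condExp hm).symm
    _ = ∫ ω, G ω * Y ω ∂μ := by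
      refine integral_congr_ae ?_
      filter_upwards [condExp_mul_of_stronglyMeasurable_left hG hGX hX, hXY] with ω h₁ h₂
      rw [h₁, Pi.mul_apply, h₂]

theorem exp_mul_of_eq_zero_or_eq_one {x : ℝ} (hx : x = 0 ∨ x = 1) (lam : ℝ) :
    Real.exp (lam * x) = 1 + (Real.exp lam - 1) * x := by
  rcases hx with rfl | rfl <;> simp

theorem integral_mul_exp_le_integral (hm : m ≤ mΩ) {S X p : Ω → ℝ} (lam : ℝ)
    (hS : Measurable[m] S) (hS_int : Integrable S μ) (hS_nonneg : 0 ≤ S)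
    (hX : AEStronglyMeasurable X μ) (hX01 : ∀ ω, X ω = 0 ∨ X ω = 1)
    (hp : Measurable[m] p) (hp01 : ∀ ω, p ω ∈ Set.Icc (0 : ℝ) 1)
    (hXp : μ[X | m] =ᵐ[μ] p) :
    ∫ ω, S ω * Real.exp (lam * X ω - (Real.exp lam - 1) * p ω) ∂μ ≤ ∫ ω, S ω ∂μ := by
  set q := Real.exp lam - 1
  set G : Ω → ℝ := fun ω => S ω * Real.exp (-(q * p ω))
  have hX_bdd : ∀ ω, ‖X ω‖ ≤ 1 := fun ω => by rcases hX01 ω with h | h <;> simp [h]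
  have hp_bdd : ∀ ω, ‖p ω‖ ≤ 1 := fun ω => by
    rw [Real.norm_eq_abs, abs_le]; constructor <;> linarith [(hp01 ω).1, (hp01 ω).2]
  have hG : Measurable[m] G := hS.mul (hp.const_mul q).neg.exp
  have hG_int : Integrable G μ := by
    refine hS_int.mul_bdd (c := Real.exp |q|)
      ((hp.mono hm le_rfl).const_mul q).neg.exp.aestronglyMeasurable (ae_of_all _ fun ω => ?_)
    rw [Real.norm_eq_abs, Real.abs_exp, Real.exp_le_exp]
    nlinarith [neg_abs_le q, abs_nonneg q, (hp01 ω).1, (hp01 ω).2]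
  have hX_int : Integrable X μ := (integrable_const (1 : ℝ)).mono' hX (ae_of_all _ hX_bdd)
  have hGX_int : Integrable (fun ω => G ω * X ω) μ := hG_int.mul_bdd hX (ae_of_all _ hX_bdd)
  have hGp_int : Integrable (fun ω => G ω * p ω) μ :=
    hG_int.mul_bdd (hp.mono hm le_rfl).aestronglyMeasurable (ae_of_all _ hp_bdd)
  have h_split : ∀ ω, S ω * Real.exp (lam * X ω - q * p ω) = G ω + q * (G ω * X ω) := by
    intro ω
    rw [sub_eq_neg_add, Real.exp_add, exp_mul_of_eq_zero_or_eq_one (hX01 ω)]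
    ring
  have h_le : ∀ ω, G ω + q * (G ω * p ω) ≤ S ω := by
    intro ω
    calc G ω + q * (G ω * p ω) = S ω * Real.exp (-(q * p ω)) * (1 + q * p ω) := by ring
      _ ≤ S ω * Real.exp (-(q * p ω)) * Real.exp (q * p ω) := by
        gcongr
        · exact mul_nonneg (hS_nonneg ω) (Real.exp_pos _).le
        · linarith [Real.add_one_le_exp (q * p ω)]
      _ = S ω := by rw [mul_assoc, ← Real.exp_add, neg_add_cancel, Real.exp_zero, mul_one]
  calc ∫ ω, S ω * Real.exp (lam * X ω - q * p ω) ∂μ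
      = ∫ ω, G ω ∂μ + q * ∫ ω, G ω * X ω ∂μ := by
        simp_rw [h_split]
        rw [integral_add hG_int (hGX_int.const_mul q), integral_const_mul]
    _ = ∫ ω, G ω ∂μ + q * ∫ ω, G ω * p ω ∂μ := by
        rw [integral_mul_eq_of_condExp_ae_eq hm hG.stronglyMeasurable hGX_int hX_int hXp]
    _ = ∫ ω, G ω + q * (G ω * p ω) ∂μ := by
        rw [integral_add hG_int (hGp_int.const_mul q), integral_const_mul]
    _ ≤ ∫ ω, S ω ∂μ := integral_mono (hG_int.add (hGp_int.const_mul q)) hS_int h_le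

end CondExp

theorem Fin.filter_val_lt_succ {n k : ℕ} (hk : k < n) :
    univ.filter (fun s : Fin n => (s : ℕ) < k + 1) =
      insert ⟨k, hk⟩ (univ.filter fun s : Fin n => (s : ℕ) < k) := by
  ext s
  simp only [mem_filter, mem_univ, true_and, mem_insert, Fin.ext_iff]
  omega

theorem integrable_and_integral_exp_sum_sub_le_one {Ω : Type*} {mΩ : MeasurableSpace Ω}
    {μ : Measure Ω} [IsProbabilityMeasure μ] {n : ℕ} {X p : Fin n → Ω → ℝ}
    (hX : ∀ t, Measurable (X t)) (hp : ∀ t, Measurable (p t))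
    (hX01 : ∀ t ω, X t ω = 0 ∨ X t ω = 1) (hp01 : ∀ t ω, p t ω ∈ Set.Icc (0 : ℝ) 1)
    (hcond : ∀ t, μ[X t | history X p t] =ᵐ[μ] p t) (lam : ℝ) :
    Integrable (fun ω => Real.exp (lam * ∑ t, X t ω - (Real.exp lam - 1) * ∑ t, p t ω)) μ ∧
      ∫ ω, Real.exp (lam * ∑ t, X t ω - (Real.exp lam - 1) * ∑ t, p t ω) ∂μ ≤ 1 := by
  set q := Real.exp lam - 1
  set f : Fin n → Ω → ℝ := fun t ω => Real.exp (lam * X t ω - q * p t ω)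
  set S : ℕ → Ω → ℝ := fun k ω => ∏ s ∈ univ.filter (fun s : Fin n => (s : ℕ) < k), f s ω
  have h_step : ∀ k (hk : k < n), S (k + 1) = fun ω => S k ω * f ⟨k, hk⟩ ω := fun k hk => by
    funext ω
    simp only [S]
    rw [Fin.filter_val_lt_succ hk, prod_insert (by simp), mul_comm]
  have key : ∀ k ≤ n, Integrable (S k) μ ∧ ∫ ω, S k ω ∂μ ≤ 1 := by
    intro k
    induction k with
    | zero => simp [S]
    | succ k ih =>
      intro hk
      obtain ⟨hS_int, hS_le⟩ := ih (by omega)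
      set t : Fin n := ⟨k, hk⟩
      have hS : Measurable[history X p t] (S k) := by
        refine measurable_prod _ fun s hs => ?_
        have hst : s < t := Fin.lt_def.mpr (mem_filter.mp hs).2
        exact ((measurable_history_of_lt hst).const_mul lam).sub
          ((measurable_history_of_le hst.le).const_mul q) |>.exp
      rw [h_step k hk]
      refine ⟨hS_int.mul_bdd (c := Real.exp (|lam| + |q|))
        (((hX t).const_mul lam).sub ((hp t).const_mul q)).exp.aestronglyMeasurable
        (ae_of_all _ fun ω => ?_), ?_⟩
      · rw [Real.norm_eq_abs, Real.abs_exp, Real.exp_le_exp]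
        have hX_mem : X t ω ∈ Set.Icc (0 : ℝ) 1 := by rcases hX01 t ω with h | h <;> simp [h]
        nlinarith [hX_mem.1, hX_mem.2, (hp01 t ω).1, (hp01 t ω).2, neg_abs_le q, le_abs_self lam,
          neg_abs_le lam, le_abs_self q]
      · exact (integral_mul_exp_le_integral (history_le hX hp t) lam hS hS_int
          (fun ω => prod_nonneg fun s _ => (Real.exp_pos _).le) (hX t).aestronglyMeasurable
          (hX01 t) (measurable_history_of_le le_rfl) (hp01 t) (hcond t)).trans hS_le
  have h_full : S n = fun ω => Real.exp (lam * ∑ t, X t ω - q * ∑ t, p t ω) := by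
    funext ω
    simp only [S, f]
    rw [filter_true_of_mem fun s _ => s.isLt, ← Real.exp_sum, sum_sub_distrib,
      mul_sum, mul_sum]
  exact h_full ▸ key n le_rfl

theorem stmt_1_general {Ω : Type*} [MeasurableSpace Ω] (μ : MeasureTheory.Measure Ω)
    [MeasureTheory.IsProbabilityMeasure μ] (n : ℕ) (X p : Fin n → Ω → ℝ)
    (hX : ∀ t, Measurable (X t)) (hp : ∀ t, Measurable (p t))
    (hX01 : ∀ t ω, X t ω = 0 ∨ X t ω = 1)
    (hp01 : ∀ t ω, p t ω ∈ Set.Icc (0 : ℝ) 1)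
    (hcond : ∀ t : Fin n,
      μ[X t | (⨆ s : Fin n, ⨆ _ : s < t, MeasurableSpace.comap (X s) inferInstance) ⊔
              (⨆ s : Fin n, ⨆ _ : s ≤ t, MeasurableSpace.comap (p s) inferInstance)]
        =ᵐ[μ] p t)
    (lam c : ℝ) :
    μ {ω | lam * ∑ t, X t ω > (Real.exp lam - 1) * ∑ t, p t ω + c}
      ≤ ENNReal.ofReal (Real.exp (-c)) := by
  set F : Ω → ℝ := fun ω => Real.exp (lam * ∑ t, X t ω - (Real.exp lam - 1) * ∑ t, p t ω)
  obtain ⟨hF_int, hF_le⟩ :=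
    integrable_and_integral_exp_sum_sub_le_one hX hp hX01 hp01 hcond lam (μ := μ)
  have h_markov : Real.exp c * μ.real {ω | Real.exp c ≤ F ω} ≤ 1 :=
    (mul_meas_ge_le_integral_of_nonneg (ae_of_all _ fun ω => (Real.exp_pos _).le) hF_int _).trans
      hF_le
  calc μ {ω | lam * ∑ t, X t ω > (Real.exp lam - 1) * ∑ t, p t ω + c}
      ≤ μ {ω | Real.exp c ≤ F ω} :=
        measure_mono fun ω hω => Real.exp_le_exp.mpr (by rw [Set.mem_ofPred_eq] at hω; linarith)
    _ = ENNReal.ofReal (μ.real {ω | Real.exp c ≤ F ω}) := (ofReal_measureReal).symm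
    _ ≤ ENNReal.ofReal (Real.exp (-c)) := by
        rw [Real.exp_neg, ← one_div]
        exact ENNReal.ofReal_le_ofReal ((le_div_iff₀' (Real.exp_pos c)).mpr h_markov)

/-- Chernoff-type bound for adaptively chosen Bernoulli probabilities. -/
theorem stmt_1 {Ω : Type*} [MeasurableSpace Ω] (μ : MeasureTheory.Measure Ω)
    [MeasureTheory.IsProbabilityMeasure μ] (n : ℕ) (X p : Fin n → Ω → ℝ)
    (hX : ∀ t, Measurable (X t)) (hp : ∀ t, Measurable (p t))
    (hX01 : ∀ t ω, X t ω = 0 ∨ X t ω = 1)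
    (hp01 : ∀ t ω, p t ω ∈ Set.Icc (0 : ℝ) 1)
    (hcond : ∀ t : Fin n,
      μ[X t | (⨆ s : Fin n, ⨆ _ : s < t, MeasurableSpace.comap (X s) inferInstance) ⊔
              (⨆ s : Fin n, ⨆ _ : s ≤ t, MeasurableSpace.comap (p s) inferInstance)]
        =ᵐ[μ] p t)
    (lam c : ℝ) (hlam : 0 < lam) :
    μ {ω | lam * ∑ t, X t ω > (Real.exp lam - 1) * ∑ t, p t ω + c}
      ≤ ENNReal.ofReal (Real.exp (-c)) :=
  stmt_1_general μ n X p hX hp hX01 hp01 hcond lam c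
end

section
/- Let P = (v_0,…,v_t) be any path with rw⁺_t(v_t) ≥ 1/2 and extend P to P' = (v_0,…,v_t,u) with u chosen uniformly among unvisited out-neighbours of v_t. Under the assumptions Δ ≥ 20, λ ∈ [1, log log Δ], w_max ≤ λ/(50 log Δ), and w⁺(v) = 1 for all v, E[B_{P'}] ≤ (1 − 15·e^λ/(λ·rd⁺_t(v_t)))·B_P + 1/rd⁺_t(v_t). -/
open Finset

variable {V : Type*} [Fintype V] [DecidableEq V]

/-- Out-neighbourhood of `v` in the digraph with edge set `E`. -/
def outN (E : Finset (V × V)) (v : V) : Finset V :=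
  Finset.univ.filter fun u => (v, u) ∈ E

/-- Out-degree. -/
def outDeg (E : Finset (V × V)) (v : V) : ℕ := (outN E v).card

/-- In-degree. -/
def inDeg (E : Finset (V × V)) (v : V) : ℕ :=
  (Finset.univ.filter fun u => (u, v) ∈ E).card

/-- Maximum degree. -/
def maxDeg (E : Finset (V × V)) : ℕ :=
  Finset.univ.sup fun v => max (outDeg E v) (inDeg E v)

/-- The edges of a cycle given as a list of distinct vertices. -/
def cycleEdges (c : List V) : Finset (V × V) := (c.zip (c.rotate 1)).toFinset

/-- `c` is a directed cycle in the digraph with edge set `E`. -/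
def IsCycle (E : Finset (V × V)) (c : List V) : Prop :=
  c ≠ [] ∧ c.Nodup ∧ ∀ e ∈ c.zip (c.rotate 1), e ∈ E

/-- Weight of a cycle. -/
def cycWeight (w : V → V → ℝ) (c : List V) : ℝ :=
  ((c.zip (c.rotate 1)).map fun e => w e.1 e.2).sum

/-- A digraph is Eulerian: balanced and (strongly) connected. -/
def Eulerian (E : Finset (V × V)) : Prop :=
  (∀ v : V, inDeg E v = outDeg E v) ∧
    ∀ u v : V, Relation.ReflTransGen (fun a b => (a, b) ∈ E) u v

/-- `cs` is a decomposition of the edge set `E` into edge-disjoint cycles. -/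
def IsCycleDecomp (E : Finset (V × V)) (cs : List (List V)) : Prop :=
  (∀ c ∈ cs, IsCycle E c) ∧
    cs.Pairwise (fun c d => Disjoint (cycleEdges c) (cycleEdges d)) ∧
    cs.foldr (fun c s => cycleEdges c ∪ s) ∅ = E

/-- Maximum edge weight of the weighted digraph. -/
noncomputable def wMax (E : Finset (V × V)) (w : V → V → ℝ) : ℝ :=
  if h : E.Nonempty then E.sup' h (fun e => w e.1 e.2) else 0

/-- `x 0, x 1, …, x t` is a (self-avoiding directed) path in `E`. -/
def IsPathTo (E : Finset (V × V)) (x : ℕ → V) (t : ℕ) : Prop :=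
  (∀ i ≤ t, ∀ j ≤ t, x i = x j → i = j) ∧ ∀ i < t, (x i, x (i + 1)) ∈ E

/-- Remaining out-degree of `v` w.r.t. the initial segment `x 0, …, x s`. -/
def remD (E : Finset (V × V)) (x : ℕ → V) (s : ℕ) (v : V) : ℕ :=
  (outN E v \ (Finset.range (s + 1)).image x).card

/-- Remaining out-weight of `v` w.r.t. the initial segment `x 0, …, x s`. -/
def remW (E : Finset (V × V)) (w : V → V → ℝ) (x : ℕ → V) (s : ℕ) (v : V) : ℝ :=
  ∑ u ∈ outN E v \ (Finset.range (s + 1)).image x, w v u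

/-- Vertices activated by the path `x 0, …, x t`, i.e. having an out-neighbour on it. -/
def activated (E : Finset (V × V)) (x : ℕ → V) (t : ℕ) : Finset V :=
  Finset.univ.filter fun v => (outN E v ∩ (Finset.range (t + 1)).image x).Nonempty

/-- Activation time of `v`: first index `s` with `x s` an out-neighbour of `v`. -/
noncomputable def act (E : Finset (V × V)) (x : ℕ → V) (v : V) : ℕ :=
  sInf {s | (v, x s) ∈ E}

/-- The quantity `a_P(v)` for the path `x 0, …, x t`. -/
noncomputable def aP (E : Finset (V × V)) (w : V → V → ℝ) (lam : ℝ) (x : ℕ → V) (t : ℕ)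
    (v : V) : ℝ :=
  Real.exp ((1 / wMax E w) * ∑ r ∈ Finset.Ico (act E x v) t,
    (lam * w v (x (r + 1)) - Real.exp lam / (remD E x r (x r) : ℝ)))

/-- The quantity `A_P` for the path `x 0, …, x t`. -/
noncomputable def AP (E : Finset (V × V)) (w : V → V → ℝ) (lam : ℝ) (x : ℕ → V) (t : ℕ) : ℝ :=
  (1 / (maxDeg E : ℝ) ^ 2) * ∑ v ∈ activated E x t, aP E w lam x t v

/-- The quantity `b_P(s)` for the path `x 0, …, x t`. -/
noncomputable def bP (w : V → V → ℝ) (lam : ℝ) (x : ℕ → V) (t s : ℕ) : ℝ :=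
  Real.exp (-(50 * Real.exp lam / lam) * ∑ r ∈ Finset.Ico s t, w (x r) (x (r + 1)))

/-- The quantity `B_P` for the path `x 0, …, x t`. -/
noncomputable def BP (E : Finset (V × V)) (w : V → V → ℝ) (lam : ℝ) (x : ℕ → V) (t : ℕ) : ℝ :=
  ∑ s ∈ Finset.range t, bP w lam x t s / (remD E x s (x s) : ℝ)

/-- Extend the path `x 0, …, x t` by the vertex `u`. -/
def extPath (x : ℕ → V) (t : ℕ) (u : V) : ℕ → V :=
  fun r => if r = t + 1 then u else x r

lemma chord_exp {z : ℝ} (h0 : 0 ≤ z) (h1 : z ≤ 1) : Real.exp (-z) ≤ 1 - (3/5) * z := by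
  have hc := convexOn_exp.2 (Set.mem_univ (0:ℝ)) (Set.mem_univ (-1:ℝ))
    (by linarith : (0:ℝ) ≤ 1 - z) h0 (by ring)
  simp only [smul_eq_mul, mul_zero, mul_neg_one, zero_add, Real.exp_zero, mul_one] at hc
  have he : Real.exp (-1) ≤ 2/5 := by
    rw [Real.exp_neg]
    have h5 : (5:ℝ)/2 ≤ Real.exp 1 := by nlinarith [Real.exp_one_gt_d9]
    rw [inv_le_comm₀ (Real.exp_pos 1) (by norm_num)]
    linarith
  nlinarith

lemma extPath_eq {V : Type*} (x : ℕ → V) (t : ℕ) (u : V) {r : ℕ} (hr : r ≤ t) :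
    extPath x t u r = x r := by
  simp [extPath, Nat.ne_of_lt (Nat.lt_succ_of_le hr)]

lemma remD_ext {V : Type*} [Fintype V] [DecidableEq V] (E : Finset (V × V)) (x : ℕ → V)
    (t : ℕ) (u : V) {s : ℕ} (hs : s ≤ t) :
    remD E (extPath x t u) s (extPath x t u s) = remD E x s (x s) := by
  unfold remD
  rw [extPath_eq x t u hs]
  congr 2
  apply Finset.image_congr
  intro r hr
  simp only [Finset.coe_range, Set.mem_Iio] at hr
  exact extPath_eq x t u (by omega)

lemma bP_ext {V : Type*} (w : V → V → ℝ) (lam : ℝ) (x : ℕ → V) (t : ℕ) (u : V) {s : ℕ}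
    (hs : s ≤ t) :
    bP w lam (extPath x t u) (t + 1) s
      = Real.exp (-(50 * Real.exp lam / lam) * w (x t) u) * bP w lam x t s := by
  unfold bP
  rw [← Real.exp_add]
  congr 1
  rw [Finset.sum_Ico_succ_top hs]
  have h1 : ∀ r ∈ Finset.Ico s t,
      w (extPath x t u r) (extPath x t u (r + 1)) = w (x r) (x (r + 1)) := by
    intro r hr
    simp only [Finset.mem_Ico] at hr
    rw [extPath_eq x t u (by omega), extPath_eq x t u (by omega)]
  rw [Finset.sum_congr rfl h1, extPath_eq x t u le_rfl]
  simp [extPath]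
  ring
lemma final_ineq (q B D A : ℝ) (hD : 0 < D) (hA : 0 ≤ A) (hq0 : 0 ≤ q) (hB : 0 ≤ B)
    (hq : q ≤ D - A) : q * (B + 1/D) / D ≤ (1 - A/D) * B + 1/D := by
  rw [div_le_iff₀ hD]
  have h2 : ((1 - A/D) * B + 1/D) * D = (D - A) * B + 1 := by field_simp
  rw [h2]
  have hqB : q * B ≤ (D - A) * B := mul_le_mul_of_nonneg_right hq hB
  have hqD : q * (1/D) ≤ 1 := by
    rw [mul_one_div, div_le_one hD]; linarith
  nlinarith [hqB, hqD]

/-- Expected decrease of the quantity `B` when the path is extended by a uniformly random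
unvisited out-neighbour. -/
theorem stmt_14 (E : Finset (V × V)) (w : V → V → ℝ) (lam : ℝ) (x : ℕ → V) (t : ℕ)
    (hloop : ∀ v : V, (v, v) ∉ E)
    (hΔ : 20 ≤ maxDeg E)
    (hlam : lam ∈ Set.Icc 1 (Real.log (Real.log (maxDeg E))))
    (hw0 : ∀ e ∈ E, 0 ≤ w e.1 e.2)
    (hwmax : wMax E w ≤ lam / (50 * Real.log (maxDeg E)))
    (hwout : ∀ v : V, ∑ u ∈ outN E v, w v u = 1)
    (hpath : IsPathTo E x t)
    (hrw : 1 / 2 ≤ remW E w x t (x t)) :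
    (∑ u ∈ outN E (x t) \ (Finset.range (t + 1)).image x, BP E w lam (extPath x t u) (t + 1))
        / (remD E x t (x t) : ℝ)
      ≤ (1 - 15 * Real.exp lam / (lam * (remD E x t (x t) : ℝ))) * BP E w lam x t
        + 1 / (remD E x t (x t) : ℝ) := by
  classical
  obtain ⟨hlam1, hlam2⟩ := hlam
  have hlam0 : (0:ℝ) < lam := by linarith
  have hexp : (0:ℝ) < Real.exp lam := Real.exp_pos lam
  set S : Finset V := outN E (x t) \ (Finset.range (t + 1)).image x with hSdef
  have hremd : remD E x t (x t) = S.card := rfl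
  have hremw : remW E w x t (x t) = ∑ u ∈ S, w (x t) u := rfl
  have hSne : S.Nonempty := by
    by_contra h
    rw [Finset.not_nonempty_iff_eq_empty] at h
    rw [hremw, h, Finset.sum_empty] at hrw
    linarith
  have hD : (0:ℝ) < (remD E x t (x t) : ℝ) := by
    rw [hremd]
    exact_mod_cast Finset.card_pos.mpr hSne
  set D : ℝ := (remD E x t (x t) : ℝ) with hDdef
  set C : ℝ := 50 * Real.exp lam / lam with hCdef
  have hC0 : (0:ℝ) < C := by positivity
  -- log Δ facts
  have hΔR : (20:ℝ) ≤ (maxDeg E : ℝ) := by exact_mod_cast hΔ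
  have hlog : (0:ℝ) < Real.log (maxDeg E) := Real.log_pos (by linarith)
  have helog : Real.exp lam ≤ Real.log (maxDeg E) := by
    calc Real.exp lam ≤ Real.exp (Real.log (Real.log (maxDeg E))) := Real.exp_le_exp.mpr hlam2
      _ = Real.log (maxDeg E) := Real.exp_log hlog
  -- weight bounds
  have hwu : ∀ u ∈ S, 0 ≤ w (x t) u ∧ C * w (x t) u ≤ 1 := by
    intro u hu
    have huN : u ∈ outN E (x t) := (Finset.mem_sdiff.mp hu).1
    have hmem : (x t, u) ∈ E := by
      simpa [outN] using huN
    have hw0u : 0 ≤ w (x t) u := hw0 _ hmem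
    refine ⟨hw0u, ?_⟩
    have hEne : E.Nonempty := ⟨_, hmem⟩
    have hwM : w (x t) u ≤ wMax E w := by
      rw [wMax, dif_pos hEne]
      exact Finset.le_sup' (fun e => w e.1 e.2) hmem
    have h1 : C * w (x t) u ≤ C * (lam / (50 * Real.log (maxDeg E))) :=
      mul_le_mul_of_nonneg_left (le_trans hwM hwmax) hC0.le
    have h2 : C * (lam / (50 * Real.log (maxDeg E))) = Real.exp lam / Real.log (maxDeg E) := by
      rw [hCdef]
      field_simp
    rw [h2] at h1
    exact le_trans h1 ((div_le_one hlog).mpr helog)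
  -- key sum bound
  have hA0 : (0:ℝ) ≤ 15 * Real.exp lam / lam := by positivity
  have hkey : ∑ u ∈ S, Real.exp (-(C * w (x t) u)) ≤ D - 15 * Real.exp lam / lam := by
    have step1 : ∑ u ∈ S, Real.exp (-(C * w (x t) u))
        ≤ ∑ u ∈ S, (1 - (3/5) * (C * w (x t) u)) := by
      refine Finset.sum_le_sum fun u hu => ?_
      obtain ⟨h1, h2⟩ := hwu u hu
      exact chord_exp (by positivity) h2
    have step2 : ∑ u ∈ S, (1 - (3/5) * (C * w (x t) u))
        = (S.card : ℝ) - (3/5) * C * ∑ u ∈ S, w (x t) u := by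
      rw [Finset.sum_sub_distrib, Finset.sum_const, nsmul_eq_mul, mul_one, Finset.mul_sum]
      congr 1
      exact Finset.sum_congr rfl fun u _ => by ring
    have step3 : (3/10) * C ≤ (3/5) * C * ∑ u ∈ S, w (x t) u := by
      have := hrw
      rw [hremw] at this
      nlinarith
    have hCval : (3/10) * C = 15 * Real.exp lam / lam := by
      rw [hCdef]; ring
    have hDcard : D = (S.card : ℝ) := by rw [hDdef, hremd]
    rw [hDcard]
    linarith [step1, step2.le, step2.ge, step3, hCval.le, hCval.ge]
  -- BP extension formula
  have hBPext : ∀ u ∈ S, BP E w lam (extPath x t u) (t + 1)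
      = Real.exp (-(C * w (x t) u)) * (BP E w lam x t + 1 / D) := by
    intro u hu
    rw [BP, Finset.sum_range_succ]
    have hterm : ∀ s ∈ Finset.range t,
        bP w lam (extPath x t u) (t + 1) s / (remD E (extPath x t u) s (extPath x t u s) : ℝ)
          = Real.exp (-(50 * Real.exp lam / lam) * w (x t) u)
            * (bP w lam x t s / (remD E x s (x s) : ℝ)) := by
      intro s hs
      have hst : s ≤ t := le_of_lt (Finset.mem_range.mp hs)
      rw [bP_ext w lam x t u hst, remD_ext E x t u hst, mul_div_assoc]
    rw [Finset.sum_congr rfl hterm, ← Finset.mul_sum, bP_ext w lam x t u le_rfl,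
      remD_ext E x t u le_rfl]
    have hbt : bP w lam x t t = 1 := by
      rw [bP, Finset.Ico_self, Finset.sum_empty, mul_zero, Real.exp_zero]
    rw [hbt, mul_one]
    have hform : -(50 * Real.exp lam / lam) * w (x t) u = -(C * w (x t) u) := by
      rw [hCdef]; ring
    rw [hform, ← hDdef,
      show (∑ i ∈ Finset.range t, bP w lam x t i / (remD E x i (x i) : ℝ))
        = BP E w lam x t from rfl]
    ring
  rw [Finset.sum_congr rfl hBPext, ← Finset.sum_mul]
  have hq0 : (0:ℝ) ≤ ∑ u ∈ S, Real.exp (-(C * w (x t) u)) :=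
    Finset.sum_nonneg fun u _ => (Real.exp_pos _).le
  have hBP0 : (0:ℝ) ≤ BP E w lam x t := by
    rw [BP]
    exact Finset.sum_nonneg fun s _ => div_nonneg (Real.exp_pos _).le (Nat.cast_nonneg _)
  have hrw15 : 15 * Real.exp lam / (lam * D) = (15 * Real.exp lam / lam) / D := by
    rw [div_div]
  rw [hrw15]
  exact final_ineq _ _ _ _ hD hA0 hq0 hBP0 hkey
end
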